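/- arXiv:2009.08596 — 2 statements merged into one kernel-verified Lean document; each statement's English description precedes it below -/
import Mathlib

section
/- Suppose there exists a □_{ω₁}-sequence, i.e., a sequence ⟨C_α : ω₁ < α < ω₂, α a limit ordinal⟩ such that each C_α is a closed unbounded subset of α, otp(C_α) < α, and C_β ∩ α = C_α whenever α is a limit point of C_β. Then there exists a sequence ⟨D_α : 0 < α < ω₂, α a limit ordinal⟩ such that: each D_α is a closed unbounded subset of α; otp(D_α) ≤ ω₁ for every α, and otp(D_α) < ω₁ whenever cf(α) = ω; every ordinal belonging to some D_β has cofinality at most ω; and D_β ∩ α = D_α whenever α is a limit point of D_β. -/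
open Ordinal Set

universe u

noncomputable section

/-- `ω₁`, the first uncountable cardinal, viewed as an ordinal. -/
def omega1 : Ordinal.{u} := (Cardinal.aleph 1).ord

/-- `ω₂`, the second uncountable cardinal, viewed as an ordinal. -/
def omega2 : Ordinal.{u} := (Cardinal.aleph 2).ord

/-- `δ` is a limit point of the set of ordinals `s`: `δ > 0` and `sup (s ∩ δ) = δ`. -/
def IsLimPt (s : Set Ordinal.{u}) (δ : Ordinal.{u}) : Prop :=
  0 < δ ∧ sSup (s ∩ Set.Iio δ) = δ

/-- `s` is a closed unbounded subset of the (limit) ordinal `α`: it consists of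
ordinals below `α`, is unbounded in `α`, and contains all of its limit points below `α`. -/
def IsClubIn (s : Set Ordinal.{u}) (α : Ordinal.{u}) : Prop :=
  s ⊆ Set.Iio α ∧ (∀ ξ < α, ∃ η ∈ s, ξ < η) ∧ ∀ δ < α, IsLimPt s δ → δ ∈ s

open Classical in
/-- The order type of a set of ordinals: the unique ordinal `o` whose lift is the
order type of the well-order induced on `s` (taken to be `0` if `s` is too large). -/
def otp (s : Set Ordinal.{u}) : Ordinal.{u} :=
  if h : ∃ o : Ordinal.{u},
      Ordinal.lift.{u + 1, u} o = @Ordinal.type s (Subrel (· < ·) (· ∈ s)) (by infer_instance)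
  then h.choose else 0

/-- `Λ(α,β)`: the largest limit point of `C β ∩ (α+1)`, taken to be `0` if none exists. -/
def Lam (C : Ordinal.{u} → Set Ordinal.{u}) (α β : Ordinal.{u}) : Ordinal.{u} :=
  sSup {δ | IsLimPt (C β ∩ Set.Iic α) δ}

/-- `C` is a square-like sequence `⟨C_α : α < ω₂⟩` as in the context:
`C_0 = ∅`, `C_{α+1} = {α}`; for limit `α < ω₂`, `C_α` is club in `α` with
`otp(C_α) ≤ ω₁`, and `otp(C_α) < ω₁` if `cf(α) = ω`; every member of any `C_α`
has cofinality at most `ω`; and `C_α = C_β ∩ α` whenever `α` is a limit point of `C_β`. -/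
structure SqSeq (C : Ordinal.{u} → Set Ordinal.{u}) : Prop where
  zero : C 0 = ∅
  succ : ∀ α : Ordinal.{u}, C (α + 1) = {α}
  club : ∀ α < omega2.{u}, Order.IsSuccLimit α → IsClubIn (C α) α
  otp_le : ∀ α < omega2.{u}, Order.IsSuccLimit α → otp (C α) ≤ omega1
  otp_lt : ∀ α < omega2.{u}, Order.IsSuccLimit α →
    Ordinal.cof α = Cardinal.aleph0 → otp (C α) < omega1
  cof_le : ∀ α β : Ordinal.{u}, β ∈ C α → Ordinal.cof β ≤ Cardinal.aleph0
  coh : ∀ α β : Ordinal.{u}, β < omega2.{u} → IsLimPt (C β) α → C α = C β ∩ Set.Iio α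

/-- `rho` is Todorcevic's ρ function associated with the sequence `C`:
`ρ(α,α) = 0`, `ρ` takes values below `ω₁`, and for `α < β < ω₂`,
`ρ(α,β) = max({otp(C_β ∩ α), ρ(α, min(C_β \ α))} ∪ {ρ(ξ,α) : ξ ∈ C_β ∩ [Λ(α,β), α)})`. -/
structure RhoFun (C : Ordinal.{u} → Set Ordinal.{u})
    (rho : Ordinal.{u} → Ordinal.{u} → Ordinal.{u}) : Prop where
  refl : ∀ α : Ordinal.{u}, rho α α = 0
  lt_omega1 : ∀ α β : Ordinal.{u}, α ≤ β → β < omega2.{u} → rho α β < omega1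
  eq : ∀ α β : Ordinal.{u}, α < β → β < omega2.{u} →
    rho α β = sSup ({otp (C β ∩ Set.Iio α), rho α (sInf (C β ∩ Set.Ici α))} ∪
      (fun ξ => rho ξ α) '' (C β ∩ Set.Ico (Lam C α β) α))

/-!
Put `D_α = α` for `α ≤ ω₁`. For `ω₁ < α`, let `γ = otp C_α < α` and transport `D_γ` along the
increasing enumeration of `C_α` to a set `T ⊆ C_α`, cofinal in `α`, of order type
`otp D_γ ≤ ω₁`, so that its proper initial segments are countable. Then `D_α` consists of the
successors and the limit points of `T` above `ω₁`; all of them have countable cofinality.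
A limit point `δ` of `D_α` is a limit point of `C_α`, so `C_δ = C_α ∩ δ`, and `otp (C_α ∩ δ)` is
a limit point of `D_γ`, where `D` is coherent by induction: hence the construction at `δ` is the
restriction of the one at `α`.
-/

open scoped Cardinal
open Order

theorem inter_Iio_inter_Iio_of_le {ι : Type*} [LinearOrder ι] {s : Set ι} {x y : ι} (h : x ≤ y) :
    s ∩ Iio y ∩ Iio x = s ∩ Iio x := by
  rw [inter_assoc, Iio_inter_Iio, min_eq_right h]

section OrderType

variable {s t : Set Ordinal.{u}} {x y α : Ordinal.{u}}

theorem lift_otp (hs : BddAbove s) :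
    lift.{u + 1} (otp s) = type (Subrel ((· < ·) : Ordinal.{u} → Ordinal.{u} → Prop) (· ∈ s)) := by
  obtain ⟨β, hβ⟩ := hs
  have hle : type (Subrel ((· < ·) : Ordinal.{u} → Ordinal.{u} → Prop) (· ∈ s)) ≤
      lift.{u + 1} (succ β) := by
    rw [← typein_ordinal, ← type_Iio_lt]
    exact (Subrel.inclusionEmbedding (· < ·) fun y hy => lt_succ_iff.2 (hβ hy)).ordinal_type_le
  obtain ⟨o, ho⟩ := mem_range_lift_of_le hle
  have hex : ∃ o : Ordinal.{u}, lift.{u + 1} o = _ := ⟨o, ho⟩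
  rw [otp, dif_pos hex]
  exact hex.choose_spec

theorem lift_otp_inter_Iio (hs : BddAbove s) (hx : x ∈ s) :
    lift.{u + 1} (otp (s ∩ Iio x)) =
      typein (Subrel ((· < ·) : Ordinal.{u} → Ordinal.{u} → Prop) (· ∈ s)) ⟨x, hx⟩ := by
  rw [lift_otp (hs.mono inter_subset_left)]
  exact (RelIso.mk (Equiv.subtypeSubtypeEquivSubtypeInter (· ∈ s) (· < x)).symm Iff.rfl :
    Subrel (· < ·) (· ∈ s ∩ Iio x) ≃r
      Subrel (Subrel (· < ·) (· ∈ s)) (· < ⟨x, hx⟩)).ordinalType_congr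

theorem otp_Iio (β : Ordinal.{u}) : otp (Iio β) = β :=
  lift_inj.1 <| (lift_otp bddAbove_Iio).trans (typein_ordinal β)

theorem otp_mono (ht : BddAbove t) (hst : s ⊆ t) : otp s ≤ otp t := by
  rw [← Ordinal.lift_le.{u + 1}, lift_otp (ht.mono hst), lift_otp ht]
  exact (Subrel.inclusionEmbedding (· < ·) hst).ordinal_type_le

theorem otp_inter_Iio_mono (hxy : x ≤ y) : otp (s ∩ Iio x) ≤ otp (s ∩ Iio y) :=
  otp_mono (bddAbove_Iio.mono inter_subset_right) (inter_subset_inter_right _ (Iio_subset_Iio hxy))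

theorem otp_inter_Iio_lt (hs : BddAbove s) (hx : x ∈ s) : otp (s ∩ Iio x) < otp s := by
  rw [← Ordinal.lift_lt.{u + 1}, lift_otp_inter_Iio hs hx, lift_otp hs]
  exact typein_lt_type _ _

theorem otp_inter_Iio_lt_otp_inter_Iio (hx : x ∈ s) (hxy : x < y) :
    otp (s ∩ Iio x) < otp (s ∩ Iio y) := by
  have h := otp_inter_Iio_lt (s := s ∩ Iio y) (bddAbove_Iio.mono inter_subset_right) ⟨hx, hxy⟩
  rwa [inter_Iio_inter_Iio_of_le hxy.le] at h

theorem lt_of_otp_inter_Iio_lt (h : otp (s ∩ Iio x) < otp (s ∩ Iio y)) : x < y :=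
  lt_of_not_ge fun hyx => (otp_inter_Iio_mono hyx).not_gt h

theorem exists_otp_inter_Iio_eq (hs : BddAbove s) {j : Ordinal.{u}} (hj : j < otp s) :
    ∃ x ∈ s, otp (s ∩ Iio x) = j := by
  rw [← Ordinal.lift_lt.{u + 1}, lift_otp hs] at hj
  obtain ⟨⟨x, hx⟩, hxj⟩ := typein_surj _ hj
  exact ⟨x, hx, lift_inj.1 ((lift_otp_inter_Iio hs hx).trans hxj)⟩

theorem otp_eq_of_bijOn {f : Ordinal.{u} → Ordinal.{u}} (hs : BddAbove s) (ht : BddAbove t)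
    (hbij : BijOn f s t) (hf : StrictMonoOn f s) : otp s = otp t := by
  rw [← Ordinal.lift_inj.{u + 1}, lift_otp hs, lift_otp ht]
  exact (RelIso.mk hbij.equiv fun {a b} => hf.lt_iff_lt a.2 b.2).ordinalType_congr

theorem countable_iff_otp_lt_omega1 (hs : BddAbove s) : s.Countable ↔ otp s < omega1.{u} := by
  have hcard : #s = Cardinal.lift.{u + 1} (otp s).card := by
    rw [lift_card, lift_otp hs, card_type]
  rw [← Cardinal.le_aleph0_iff_set_countable, hcard, Cardinal.lift_le_aleph0,
    ← Cardinal.lt_aleph_one_iff, omega1, Cardinal.lt_ord]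

theorem otp_le_omega1 (hs : BddAbove s) (h : ∀ x ∈ s, (s ∩ Iio x).Countable) :
    otp s ≤ omega1.{u} := by
  by_contra! hlt
  obtain ⟨x, hx, hxω⟩ := exists_otp_inter_Iio_eq hs hlt
  exact ((countable_iff_otp_lt_omega1 (hs.mono inter_subset_left)).1 (h x hx)).ne hxω

theorem isSuccLimit_otp (hs : s ⊆ Iio α) (hα : IsSuccLimit α) (hcof : ∀ ζ < α, ∃ x ∈ s, ζ < x) :
    IsSuccLimit (otp s) := by
  have hbdd : BddAbove s := bddAbove_Iio.mono hs
  obtain ⟨x₀, hx₀, -⟩ := hcof 0 hα.bot_lt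
  refine Ordinal.isSuccLimit_iff.2 ⟨(otp_inter_Iio_lt hbdd hx₀).ne_bot,
    isSuccPrelimit_iff_succ_lt.2 fun a ha => ?_⟩
  obtain ⟨x, hx, rfl⟩ := exists_otp_inter_Iio_eq hbdd ha
  obtain ⟨y, hy, hxy⟩ := hcof x (hs hx)
  exact (succ_le_of_lt (otp_inter_Iio_lt_otp_inter_Iio hx hxy)).trans_lt
    (otp_inter_Iio_lt hbdd hy)

end OrderType

section LimitPoints

variable {s t : Set Ordinal.{u}} {α δ : Ordinal.{u}}

theorem isLimPt_iff : IsLimPt s δ ↔ 0 < δ ∧ ∀ ζ < δ, ∃ x ∈ s, ζ < x ∧ x < δ := by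
  refine and_congr_right fun hδ => ⟨fun hsup ζ hζ => ?_, fun h => ?_⟩
  · have hne : (s ∩ Iio δ).Nonempty := by
      by_contra hemp
      rw [not_nonempty_iff_eq_empty.1 hemp, csSup_empty] at hsup
      exact hδ.ne hsup
    obtain ⟨x, hx, hζx⟩ := exists_lt_of_lt_csSup hne (hsup ▸ hζ)
    exact ⟨x, hx.1, hζx, hx.2⟩
  · obtain ⟨x₀, hx₀, -, hx₀δ⟩ := h 0 hδ
    refine (csSup_le (⟨x₀, hx₀, hx₀δ⟩ : (s ∩ Iio δ).Nonempty) fun y hy => hy.2.le).antisymm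
      (le_of_forall_lt fun ζ hζ => ?_)
    obtain ⟨x, hx, hζx, hxδ⟩ := h ζ hζ
    exact hζx.trans_le (le_csSup (bddAbove_Iio.mono inter_subset_right) ⟨hx, hxδ⟩)

theorem IsLimPt.isSuccLimit (h : IsLimPt s δ) : IsSuccLimit δ := by
  obtain ⟨hδ, h⟩ := isLimPt_iff.1 h
  refine Ordinal.isSuccLimit_iff.2 ⟨hδ.ne', isSuccPrelimit_iff_succ_lt.2 fun a ha => ?_⟩
  obtain ⟨x, -, hax, hxδ⟩ := h a ha
  exact (succ_le_of_lt hax).trans_lt hxδ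

theorem IsLimPt.mono (h : IsLimPt s δ) (hst : s ⊆ t) : IsLimPt t δ := by
  rw [isLimPt_iff] at h ⊢
  refine ⟨h.1, fun ζ hζ => ?_⟩
  obtain ⟨x, hx, hζx, hxδ⟩ := h.2 ζ hζ
  exact ⟨x, hst hx, hζx, hxδ⟩

theorem isLimPt_inter_Iio_iff {δ' : Ordinal.{u}} (h : δ ≤ δ') :
    IsLimPt (s ∩ Iio δ') δ ↔ IsLimPt s δ := by
  refine ⟨fun hδ => hδ.mono inter_subset_left, fun hδ => ?_⟩
  rw [isLimPt_iff] at hδ ⊢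
  refine ⟨hδ.1, fun ζ hζ => ?_⟩
  obtain ⟨x, hx, hζx, hxδ⟩ := hδ.2 ζ hζ
  exact ⟨x, ⟨hx, hxδ.trans_le h⟩, hζx, hxδ⟩

theorem IsLimPt.le_of_subset_Iio (h : IsLimPt s δ) (hs : s ⊆ Iio α) : δ ≤ α := by
  refine le_of_not_gt fun hαδ => ?_
  obtain ⟨x, hx, hαx, -⟩ := (isLimPt_iff.1 h).2 α hαδ
  exact (hs hx).asymm hαx

theorem IsLimPt.cof_le_aleph0 (h : IsLimPt s δ) (hs : (s ∩ Iio δ).Countable) : cof δ ≤ ℵ₀ := by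
  by_contra! hlt
  refine (sSup_lt_of_lt_cof ?_ fun _ hx => hx.2).ne h.2
  refine (Cardinal.le_aleph0_iff_set_countable.2 hs).trans_lt ?_
  rw [← lift_cof, ← Cardinal.lift_aleph0.{u + 1, u}, Cardinal.lift_lt]
  exact hlt

end LimitPoints

section Countability

variable {s : Set Ordinal.{u}} {α : Ordinal.{u}}

def LocallyCountableBelow (s : Set Ordinal.{u}) (α : Ordinal.{u}) : Prop :=
  ∀ z < α, (s ∩ Iio z).Countable

theorem LocallyCountableBelow.otp_le_omega1 (h : LocallyCountableBelow s α) (hs : s ⊆ Iio α) :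
    otp s ≤ omega1.{u} :=
  _root_.otp_le_omega1 (bddAbove_Iio.mono hs) fun x hx => h x (hs hx)

theorem LocallyCountableBelow.countable (h : LocallyCountableBelow s α) (hs : s ⊆ Iio α)
    (hα : IsSuccLimit α) (hcof : cof α = ℵ₀) : s.Countable := by
  obtain ⟨f, hf⟩ := exists_isFundamentalSeq (o := α) (congrArg Cardinal.ord hcof)
  have : Countable (Iio (Cardinal.ord ℵ₀)) := ((countable_iff_otp_lt_omega1 bddAbove_Iio).2
    (by rw [otp_Iio, omega1]; exact Cardinal.ord_lt_ord.2 Cardinal.aleph0_lt_aleph_one)).to_subtype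
  refine (countable_iUnion fun i => h (succ (f i)) (hα.succ_lt (f i).2)).mono fun x hx => ?_
  obtain ⟨-, ⟨i, rfl⟩, hi⟩ := hf.isCofinal_range ⟨x, hs hx⟩
  exact mem_iUnion.2 ⟨i, hx, lt_succ_iff.2 (Subtype.coe_le_coe.2 hi)⟩

theorem locallyCountableBelow_of_otp_le_omega1 (hs : s ⊆ Iio α) (h : otp s ≤ omega1.{u})
    (hcof : ∀ ζ < α, ∃ x ∈ s, ζ < x) : LocallyCountableBelow s α := by
  intro z hz
  obtain ⟨x, hx, hzx⟩ := hcof z hz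
  have hbdd : BddAbove s := bddAbove_Iio.mono hs
  exact ((countable_iff_otp_lt_omega1 (hbdd.mono inter_subset_left)).2
    ((otp_inter_Iio_lt hbdd hx).trans_le h)).mono
      (inter_subset_inter_right _ (Iio_subset_Iio hzx.le))

theorem cof_le_aleph0_of_lt_omega1 {ξ : Ordinal.{u}} (h : ξ < omega1.{u}) : cof ξ ≤ ℵ₀ :=
  (cof_le_card ξ).trans (Cardinal.lt_aleph_one_iff.1 (Cardinal.lt_ord.1 h))

end Countability

section EnumImage

/-- The image of `d` under the increasing enumeration of `c`. -/
def enumImage (c d : Set Ordinal.{u}) : Set Ordinal.{u} :=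
  {x | x ∈ c ∧ otp (c ∩ Iio x) ∈ d}

variable {c d : Set Ordinal.{u}} {α δ : Ordinal.{u}}

theorem enumImage_subset : enumImage c d ⊆ c := fun _ hx => hx.1

theorem otp_enumImage (hc : BddAbove c) (hd : d ⊆ Iio (otp c)) : otp (enumImage c d) = otp d := by
  have hmono : StrictMonoOn (fun x => otp (c ∩ Iio x)) (enumImage c d) :=
    fun x hx _ _ hxy => otp_inter_Iio_lt_otp_inter_Iio hx.1 hxy
  refine otp_eq_of_bijOn (hc.mono enumImage_subset) (bddAbove_Iio.mono hd)
    ⟨fun x hx => hx.2, hmono.injOn, fun j hj => ?_⟩ hmono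
  obtain ⟨x, hx, rfl⟩ := exists_otp_inter_Iio_eq hc (hd hj)
  exact ⟨x, ⟨hx, hj⟩, rfl⟩

theorem exists_mem_enumImage_gt (hc : c ⊆ Iio α) (hccof : ∀ ζ < α, ∃ x ∈ c, ζ < x)
    (hd : d ⊆ Iio (otp c)) (hdcof : ∀ j < otp c, ∃ i ∈ d, j < i) :
    ∀ ζ < α, ∃ x ∈ enumImage c d, ζ < x := by
  intro ζ hζ
  have hbdd : BddAbove c := bddAbove_Iio.mono hc
  obtain ⟨y, hy, hζy⟩ := hccof ζ hζ
  obtain ⟨i, hi, hyi⟩ := hdcof _ (otp_inter_Iio_lt hbdd hy)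
  obtain ⟨x, hx, rfl⟩ := exists_otp_inter_Iio_eq hbdd (hd hi)
  exact ⟨x, ⟨hx, hi⟩, hζy.trans (lt_of_otp_inter_Iio_lt hyi)⟩

theorem IsLimPt.isLimPt_otp_inter_Iio (h : IsLimPt (enumImage c d) δ) :
    IsLimPt d (otp (c ∩ Iio δ)) := by
  obtain ⟨hδ, h⟩ := isLimPt_iff.1 h
  refine isLimPt_iff.2 ⟨?_, fun ζ hζ => ?_⟩
  · obtain ⟨x, hx, -, hxδ⟩ := h 0 hδ
    exact (otp_inter_Iio_lt_otp_inter_Iio hx.1 hxδ).trans_le' bot_le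
  · obtain ⟨y, hy, rfl⟩ := exists_otp_inter_Iio_eq (bddAbove_Iio.mono inter_subset_right) hζ
    rw [inter_Iio_inter_Iio_of_le hy.2.le] at hζ ⊢
    obtain ⟨x, hx, hyx, hxδ⟩ := h y hy.2
    exact ⟨_, hx.2, otp_inter_Iio_lt_otp_inter_Iio hy.1 hyx,
      otp_inter_Iio_lt_otp_inter_Iio hx.1 hxδ⟩

theorem enumImage_inter_Iio :
    enumImage c d ∩ Iio δ = enumImage (c ∩ Iio δ) (d ∩ Iio (otp (c ∩ Iio δ))) := by
  ext x
  simp only [enumImage, mem_inter_iff, mem_ofPred_eq, mem_Iio]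
  constructor
  · rintro ⟨⟨hx, hxd⟩, hxδ⟩
    rw [inter_Iio_inter_Iio_of_le hxδ.le]
    exact ⟨⟨hx, hxδ⟩, hxd, otp_inter_Iio_lt_otp_inter_Iio hx hxδ⟩
  · rintro ⟨⟨hx, hxδ⟩, hxd, -⟩
    rw [inter_Iio_inter_Iio_of_le hxδ.le] at hxd
    exact ⟨⟨hx, hxd⟩, hxδ⟩

end EnumImage

section SuccsAndLimPts

def succsAndLimPts (T : Set Ordinal.{u}) (α : Ordinal.{u}) : Set Ordinal.{u} :=
  succ '' T ∪ {δ | δ < α ∧ IsLimPt T δ}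

variable {T : Set Ordinal.{u}} {α β δ z : Ordinal.{u}}

theorem succsAndLimPts_subset_Iio (hα : IsSuccLimit α) (hT : T ⊆ Iio α) :
    succsAndLimPts T α ⊆ Iio α := by
  rintro _ (⟨x, hx, rfl⟩ | ⟨hδα, -⟩)
  exacts [hα.succ_lt (hT hx), hδα]

theorem IsLimPt.of_succsAndLimPts (h : IsLimPt (succsAndLimPts T α) δ) : IsLimPt T δ := by
  have hδ := h.isSuccLimit
  refine isLimPt_iff.2 ⟨hδ.bot_lt, fun ζ hζ => ?_⟩
  obtain ⟨z, hz, hζz, hzδ⟩ := (isLimPt_iff.1 h).2 _ (hδ.succ_lt hζ)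
  rcases hz with ⟨y, hy, rfl⟩ | ⟨-, hzT⟩
  · exact ⟨y, hy, succ_lt_succ_iff.1 hζz, (lt_succ y).trans hzδ⟩
  · obtain ⟨x, hx, hζx, hxz⟩ := (isLimPt_iff.1 hzT).2 _ hζz
    exact ⟨x, hx, (lt_succ ζ).trans hζx, hxz.trans hzδ⟩

theorem isClubIn_Ioi_inter_succsAndLimPts (hα : IsSuccLimit α) (hβ : β < α) (hT : T ⊆ Iio α)
    (hTcof : ∀ ζ < α, ∃ x ∈ T, ζ < x) : IsClubIn (Ioi β ∩ succsAndLimPts T α) α := by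
  refine ⟨inter_subset_right.trans (succsAndLimPts_subset_Iio hα hT), fun ζ hζ => ?_,
    fun δ hδα hδ => ?_⟩
  · obtain ⟨x, hx, hx'⟩ := hTcof _ (max_lt hζ hβ)
    obtain ⟨hζx, hβx⟩ := max_lt_iff.1 hx'
    exact ⟨succ x, ⟨hβx.trans (lt_succ x), Or.inl ⟨x, hx, rfl⟩⟩, hζx.trans (lt_succ x)⟩
  · obtain ⟨z, hz, -, hzδ⟩ := (isLimPt_iff.1 hδ).2 0 hδ.isSuccLimit.bot_lt
    exact ⟨hz.1.trans hzδ, Or.inr ⟨hδα, (hδ.mono inter_subset_right).of_succsAndLimPts⟩⟩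

theorem countable_setOf_isLimPt_lt (hT : (T ∩ Iio z).Countable) :
    {δ | δ < z ∧ IsLimPt T δ}.Countable := by
  have hmaps : MapsTo (fun δ => otp (T ∩ Iio δ)) {δ | δ < z ∧ IsLimPt T δ}
      (Iio (succ (otp (T ∩ Iio z)))) :=
    fun δ hδ => lt_succ_iff.2 (otp_inter_Iio_mono hδ.1.le)
  refine hmaps.countable_of_injOn (StrictMonoOn.injOn fun δ₁ _ δ₂ hδ₂ h => ?_) ?_
  · obtain ⟨x, hx, hδ₁x, hxδ₂⟩ := (isLimPt_iff.1 hδ₂.2).2 δ₁ h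
    exact (otp_inter_Iio_mono hδ₁x.le).trans_lt (otp_inter_Iio_lt_otp_inter_Iio hx hxδ₂)
  · rw [countable_iff_otp_lt_omega1 bddAbove_Iio, otp_Iio, omega1]
    exact (Cardinal.isSuccLimit_ord (Cardinal.aleph0_le_aleph 1)).succ_lt
      ((countable_iff_otp_lt_omega1 (bddAbove_Iio.mono inter_subset_right)).1 hT)

theorem LocallyCountableBelow.succsAndLimPts (hT : LocallyCountableBelow T α) :
    LocallyCountableBelow (succsAndLimPts T α) α := by
  intro z hz
  refine (((hT z hz).image succ).union (countable_setOf_isLimPt_lt (hT z hz))).mono ?_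
  rintro _ ⟨⟨x, hx, rfl⟩ | ⟨-, hxT⟩, hxz⟩
  · exact Or.inl ⟨x, ⟨hx, (lt_succ x).trans hxz⟩, rfl⟩
  · exact Or.inr ⟨hxz, hxT⟩

theorem cof_le_aleph0_of_mem_succsAndLimPts (hT : LocallyCountableBelow T α)
    (hz : z ∈ succsAndLimPts T α) : cof z ≤ ℵ₀ := by
  rcases hz with ⟨x, -, rfl⟩ | ⟨hzα, hzT⟩
  · rw [succ_eq_add_one, cof_add_one]
    exact Cardinal.one_le_aleph0
  · exact hzT.cof_le_aleph0 (hT z hzα)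

theorem succsAndLimPts_inter_Iio (hδ : IsSuccLimit δ) (hδα : δ ≤ α) :
    succsAndLimPts T α ∩ Iio δ = succsAndLimPts (T ∩ Iio δ) δ := by
  ext z
  simp only [succsAndLimPts, mem_inter_iff, mem_union, mem_image, mem_ofPred_eq, mem_Iio]
  constructor
  · rintro ⟨⟨x, hx, rfl⟩ | ⟨-, hzT⟩, hzδ⟩
    · exact Or.inl ⟨x, ⟨hx, hδ.succ_lt_iff.1 hzδ⟩, rfl⟩
    · exact Or.inr ⟨hzδ, (isLimPt_inter_Iio_iff hzδ.le).2 hzT⟩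
  · rintro (⟨x, ⟨hx, hxδ⟩, rfl⟩ | ⟨hzδ, hzT⟩)
    · exact ⟨Or.inl ⟨x, hx, rfl⟩, hδ.succ_lt hxδ⟩
    · exact ⟨Or.inr ⟨hzδ.trans_le hδα, (isLimPt_inter_Iio_iff hzδ.le).1 hzT⟩, hzδ⟩

end SuccsAndLimPts

section Construction

variable {C : Ordinal.{u} → Set Ordinal.{u}} {α δ : Ordinal.{u}}

/-- For limit `ω₁ < α < ω₂` the hypotheses of the theorem give `otp C_α < α`; otherwise above `ω₁`
the `else` branch only makes the recursion total. -/
def refinedSeq (C : Ordinal.{u} → Set Ordinal.{u}) : Ordinal.{u} → Set Ordinal.{u} :=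
  Ordinal.lt_wf.fix fun α D =>
    if h : omega1.{u} < α ∧ otp (C α) < α then
      Ioi omega1.{u} ∩ succsAndLimPts (enumImage (C α) (D (otp (C α)) h.2)) α
    else Iio α

theorem refinedSeq_of_le_omega1 (h : α ≤ omega1.{u}) : refinedSeq C α = Iio α := by
  rw [refinedSeq, Ordinal.lt_wf.fix_eq, dif_neg fun h' => h'.1.not_ge h]

theorem refinedSeq_of_omega1_lt (h : omega1.{u} < α) (hC : otp (C α) < α) :
    refinedSeq C α =
      Ioi omega1.{u} ∩ succsAndLimPts (enumImage (C α) (refinedSeq C (otp (C α)))) α := by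
  rw [refinedSeq, Ordinal.lt_wf.fix_eq, dif_pos ⟨h, hC⟩]

structure IsRefinedSquareAt (D : Ordinal.{u} → Set Ordinal.{u}) (α : Ordinal.{u}) : Prop where
  isClubIn : IsClubIn (D α) α
  otp_le : otp (D α) ≤ omega1.{u}
  otp_lt : cof α = ℵ₀ → otp (D α) < omega1.{u}
  cof_le : ∀ ξ ∈ D α, cof ξ ≤ ℵ₀
  inter_Iio : ∀ δ, IsLimPt (D α) δ → D α ∩ Iio δ = D δ

theorem isRefinedSquareAt_of_le_omega1 (hα : IsSuccLimit α) (h : α ≤ omega1.{u}) :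
    IsRefinedSquareAt (refinedSeq C) α := by
  have hD : refinedSeq C α = Iio α := refinedSeq_of_le_omega1 h
  constructor <;> simp only [hD, otp_Iio]
  · exact ⟨subset_rfl, fun ξ hξ => ⟨succ ξ, hα.succ_lt hξ, lt_succ ξ⟩, fun δ hδ _ => hδ⟩
  · exact h
  · refine fun hcof => h.lt_of_ne ?_
    rintro rfl
    rw [omega1, Cardinal.isRegular_aleph_one.cof_ord] at hcof
    exact Cardinal.aleph0_lt_aleph_one.ne' hcof
  · exact fun ξ hξ => cof_le_aleph0_of_lt_omega1 (hξ.trans_le h)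
  · intro δ hδ
    have hδα := hδ.le_of_subset_Iio subset_rfl
    rw [Iio_inter_Iio, min_eq_right hδα, refinedSeq_of_le_omega1 (hδα.trans h)]

theorem refinedSeq_inter_Iio_of_omega1_lt (hω : omega1.{u} < α) (hγ : otp (C α) < α)
    (hotp : ∀ δ < α, IsSuccLimit δ → omega1.{u} < δ → otp (C δ) < δ)
    (hcoh : ∀ δ, IsLimPt (C α) δ → omega1.{u} < δ → C α ∩ Iio δ = C δ)
    (ih : ∀ ξ, IsLimPt (refinedSeq C (otp (C α))) ξ →
      refinedSeq C (otp (C α)) ∩ Iio ξ = refinedSeq C ξ)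
    (hδ : IsLimPt (refinedSeq C α) δ) (hδα : δ < α) :
    refinedSeq C α ∩ Iio δ = refinedSeq C δ := by
  rw [refinedSeq_of_omega1_lt hω hγ] at hδ ⊢
  have hδT := (hδ.mono inter_subset_right).of_succsAndLimPts
  have hδω : omega1.{u} < δ := by
    obtain ⟨z, hz, -, hzδ⟩ := (isLimPt_iff.1 hδ).2 0 hδ.isSuccLimit.bot_lt
    exact hz.1.trans hzδ
  have hCδ := hcoh δ (hδT.mono enumImage_subset) hδω
  rw [refinedSeq_of_omega1_lt hδω (hotp δ hδα hδT.isSuccLimit hδω), ← hCδ,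
    ← ih _ hδT.isLimPt_otp_inter_Iio, ← enumImage_inter_Iio,
    ← succsAndLimPts_inter_Iio hδT.isSuccLimit hδα.le, inter_assoc]

theorem isRefinedSquareAt_of_omega1_lt (hα : IsSuccLimit α) (hω : omega1.{u} < α)
    (hCsub : C α ⊆ Iio α) (hCcof : ∀ ζ < α, ∃ x ∈ C α, ζ < x) (hγ : otp (C α) < α)
    (hotp : ∀ δ < α, IsSuccLimit δ → omega1.{u} < δ → otp (C δ) < δ)
    (hcoh : ∀ δ, IsLimPt (C α) δ → omega1.{u} < δ → C α ∩ Iio δ = C δ)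
    (ih : IsRefinedSquareAt (refinedSeq C) (otp (C α))) :
    IsRefinedSquareAt (refinedSeq C) α := by
  obtain ⟨⟨hDsub, hDcof, -⟩, hDotp, -, -, hDcoh⟩ := ih
  set T := enumImage (C α) (refinedSeq C (otp (C α)))
  have hTsub : T ⊆ Iio α := enumImage_subset.trans hCsub
  have hTcof := exists_mem_enumImage_gt hCsub hCcof hDsub hDcof
  have hTloc : LocallyCountableBelow T α := locallyCountableBelow_of_otp_le_omega1 hTsub
    ((otp_enumImage (bddAbove_Iio.mono hCsub) hDsub).trans_le hDotp) hTcof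
  have hclub := isClubIn_Ioi_inter_succsAndLimPts hα hω hTsub hTcof
  have hloc : LocallyCountableBelow (Ioi omega1.{u} ∩ succsAndLimPts T α) α := fun z hz =>
    (hTloc.succsAndLimPts z hz).mono (inter_subset_inter_left _ inter_subset_right)
  have hD := refinedSeq_of_omega1_lt hω hγ
  refine ⟨hD ▸ hclub, hD ▸ hloc.otp_le_omega1 hclub.1, fun hcof => hD ▸
    (countable_iff_otp_lt_omega1 (bddAbove_Iio.mono hclub.1)).1 (hloc.countable hclub.1 hα hcof),
    fun ξ hξ => cof_le_aleph0_of_mem_succsAndLimPts hTloc (hD ▸ hξ).2, fun δ hδ => ?_⟩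
  rcases (hδ.le_of_subset_Iio (hD ▸ hclub.1)).eq_or_lt with rfl | hδα
  · exact inter_eq_left.2 (hD ▸ hclub.1)
  · exact refinedSeq_inter_Iio_of_omega1_lt hω hγ hotp hcoh hDcoh hδ hδα

theorem isRefinedSquareAt_refinedSeq
    (hclub : ∀ β, IsSuccLimit β → omega1.{u} < β → β < omega2.{u} → IsClubIn (C β) β)
    (hotp : ∀ β, IsSuccLimit β → omega1.{u} < β → β < omega2.{u} → otp (C β) < β)
    (hcoh : ∀ β, IsSuccLimit β → omega1.{u} < β → β < omega2.{u} →
      ∀ δ, IsLimPt (C β) δ → omega1.{u} < δ → C β ∩ Iio δ = C δ)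
    (hα : IsSuccLimit α) (hα2 : α < omega2.{u}) : IsRefinedSquareAt (refinedSeq C) α := by
  induction α using WellFoundedLT.induction with | _ α ih
  rcases le_or_gt α omega1.{u} with hle | hω
  · exact isRefinedSquareAt_of_le_omega1 hα hle
  obtain ⟨hCsub, hCcof, -⟩ := hclub α hα hω hα2
  have hγ := hotp α hα hω hα2
  exact isRefinedSquareAt_of_omega1_lt hα hω hCsub hCcof hγ
    (fun δ hδα hδ hδω => hotp δ hδ hδω (hδα.trans hα2)) (hcoh α hα hω hα2)
    (ih _ hγ (isSuccLimit_otp hCsub hα hCcof) (hγ.trans hα2))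

end Construction

/-- From a `□_{ω₁}`-sequence `⟨C_α : ω₁ < α < ω₂, α limit⟩` one obtains a sequence
`⟨D_α : 0 < α < ω₂, α limit⟩` such that each `D_α` is club in `α`, `otp(D_α) ≤ ω₁`
(and `< ω₁` if `cf(α) = ω`), every member of any `D_β` has cofinality at most `ω`,
and `D_β ∩ α = D_α` whenever `α` is a limit point of `D_β`. -/
theorem square_sequence_refinement (C : Ordinal.{u} → Set Ordinal.{u})
    (hclub : ∀ β : Ordinal.{u}, Order.IsSuccLimit β → omega1.{u} < β → β < omega2.{u} →
      IsClubIn (C β) β)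
    (hotp : ∀ β : Ordinal.{u}, Order.IsSuccLimit β → omega1.{u} < β → β < omega2.{u} →
      otp (C β) < β)
    (hcoh : ∀ β : Ordinal.{u}, Order.IsSuccLimit β → omega1.{u} < β → β < omega2.{u} →
      ∀ α : Ordinal.{u}, IsLimPt (C β) α → omega1.{u} < α → C β ∩ Set.Iio α = C α) :
    ∃ D : Ordinal.{u} → Set Ordinal.{u},
      (∀ α : Ordinal.{u}, Order.IsSuccLimit α → 0 < α → α < omega2.{u} →
        IsClubIn (D α) α) ∧
      (∀ α : Ordinal.{u}, Order.IsSuccLimit α → 0 < α → α < omega2.{u} →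
        otp (D α) ≤ omega1.{u}) ∧
      (∀ α : Ordinal.{u}, Order.IsSuccLimit α → 0 < α → α < omega2.{u} →
        Ordinal.cof α = Cardinal.aleph0 → otp (D α) < omega1.{u}) ∧
      (∀ β : Ordinal.{u}, Order.IsSuccLimit β → 0 < β → β < omega2.{u} →
        ∀ ξ ∈ D β, Ordinal.cof ξ ≤ Cardinal.aleph0) ∧
      (∀ β : Ordinal.{u}, Order.IsSuccLimit β → 0 < β → β < omega2.{u} →
        ∀ α : Ordinal.{u}, IsLimPt (D β) α → D β ∩ Set.Iio α = D α) := by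
  have H α hα hα2 := isRefinedSquareAt_refinedSeq (C := C) (α := α) hclub hotp hcoh hα hα2
  exact ⟨refinedSeq C, fun α hα _ h => (H α hα h).isClubIn, fun α hα _ h => (H α hα h).otp_le,
    fun α hα _ h => (H α hα h).otp_lt, fun β hβ _ h => (H β hβ h).cof_le,
    fun β hβ _ h => (H β hβ h).inter_Iio⟩
end
end

section
/- For every limit ordinal β < ω₂ and every γ with β < γ < ω₂, there exists β' < β such that for all α with β' < α < β, ρ(α, γ) ≥ ρ(α, β). -/
open Ordinal Set

universe u

noncomputable section

/-! By induction on `γ`. If `β` is a limit point of `C γ`, coherence gives `C β = C γ ∩ β`, and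
then the recursion computes `ρ(α, β)` and `ρ(α, γ)` from the same data for every `α < β`.
Otherwise `C γ ∩ β` is bounded below `β` by some `ξ`, so for `ξ < α < β` the next element
`η = min (C γ \ α) = min (C γ \ β)` does not depend on `α`; the recursion gives
`ρ(α, η) ≤ ρ(α, γ)`, and `ρ(α, β) ≤ ρ(α, η)` on a tail of `β` either trivially (`η = β`) or by
the induction hypothesis (`β < η < γ`). -/

theorem inter_eq_inter_of_eq_inter {X : Type*} {s t u v : Set X}
    (hst : s = t ∩ v) (hu : u ⊆ v) : s ∩ u = t ∩ u := by
  rw [hst, inter_assoc, inter_eq_right.mpr hu]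

theorem csInf_inter_Ici_eq_of_eq_inter_Iio {s t : Set Ordinal.{u}} {α β : Ordinal.{u}}
    (hst : s = t ∩ Iio β) (hne : (s ∩ Ici α).Nonempty) :
    sInf (s ∩ Ici α) = sInf (t ∩ Ici α) := by
  have hsub : s ∩ Ici α ⊆ t ∩ Ici α := inter_subset_inter_left _ (hst ▸ inter_subset_left)
  obtain ⟨e, he⟩ := hne
  have hmin : sInf (t ∩ Ici α) ∈ t ∩ Ici α := csInf_mem ⟨e, hsub he⟩
  have hmin_lt : sInf (t ∩ Ici α) < β :=
    (csInf_le' (hsub he)).trans_lt (hst ▸ he.1 : e ∈ t ∩ Iio β).2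
  have hmin_mem : sInf (t ∩ Ici α) ∈ s ∩ Ici α := ⟨hst ▸ ⟨hmin.1, hmin_lt⟩, hmin.2⟩
  exact le_antisymm (csInf_le' hmin_mem) (csInf_le_csInf' ⟨e, he⟩ hsub)

theorem inter_Ici_eq_of_sSup_inter_Iio_lt {s : Set Ordinal.{u}} {α β : Ordinal.{u}}
    (hgap : sSup (s ∩ Iio β) < α) (hαβ : α ≤ β) : s ∩ Ici α = s ∩ Ici β := by
  ext x
  refine ⟨fun ⟨hx, hαx⟩ => ⟨hx, mem_Ici.mpr (not_lt.mp fun hxβ => ?_)⟩, fun ⟨hx, hβx⟩ => ⟨hx, hαβ.trans hβx⟩⟩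
  have : x ≤ sSup (s ∩ Iio β) := le_csSup ⟨β, fun _ hy => hy.2.le⟩ ⟨hx, hxβ⟩
  exact (hgap.trans_le hαx).not_ge this

theorem sSup_inter_Iio_lt_of_not_isLimPt {s : Set Ordinal.{u}} {β : Ordinal.{u}}
    (hβ : 0 < β) (hs : ¬IsLimPt s β) : sSup (s ∩ Iio β) < β :=
  (csSup_le' fun _ hx => hx.2.le).lt_of_ne fun h => hs ⟨hβ, h⟩

namespace SqSeq

variable {C : Ordinal.{u} → Set Ordinal.{u}} (hC : SqSeq C) {γ : Ordinal.{u}}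
include hC

theorem subset_Iio (hγ : γ < omega2.{u}) : C γ ⊆ Iio γ := by
  rcases Ordinal.zero_or_succ_or_isSuccLimit γ with rfl | ⟨δ, rfl⟩ | hlim
  · simp [hC.zero]
  · simp [Order.succ_eq_add_one, hC.succ]
  · exact (hC.club γ hγ hlim).1

theorem inter_Ici_nonempty {β : Ordinal.{u}} (hβγ : β < γ) (hγ : γ < omega2.{u}) :
    (C γ ∩ Ici β).Nonempty := by
  rcases Ordinal.zero_or_succ_or_isSuccLimit γ with rfl | ⟨δ, rfl⟩ | hlim
  · exact absurd hβγ (not_lt_zero (a := β))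
  · refine ⟨δ, ?_, Order.lt_succ_iff.mp hβγ⟩
    simp [Order.succ_eq_add_one, hC.succ]
  · obtain ⟨η, hη, hβη⟩ := (hC.club γ hγ hlim).2.1 β hβγ
    exact ⟨η, hη, hβη.le⟩

end SqSeq

namespace RhoFun

variable {C : Ordinal.{u} → Set Ordinal.{u}} {rho : Ordinal.{u} → Ordinal.{u} → Ordinal.{u}}
  (hrho : RhoFun C rho)
include hrho

theorem rho_sInf_inter_Ici_le {α δ : Ordinal.{u}} (hαδ : α < δ) (hδ : δ < omega2.{u}) :
    rho α (sInf (C δ ∩ Ici α)) ≤ rho α δ := by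
  rw [hrho.eq α δ hαδ hδ]
  have : Small.{u} ↥(C δ ∩ Ico (Lam C α δ) α) := small_subset (s := Iio α) fun _ hx => hx.2.2
  exact le_csSup Ordinal.bddAbove_of_small (by simp)

theorem rho_eq_of_eq_inter_Iio {α β γ : Ordinal.{u}} (hcoh : C β = C γ ∩ Iio β)
    (hne : (C β ∩ Ici α).Nonempty) (hαβ : α < β) (hβγ : β < γ) (hγ : γ < omega2.{u}) :
    rho α β = rho α γ := by
  have hLam : Lam C α β = Lam C α γ := by
    unfold Lam
    rw [inter_eq_inter_of_eq_inter hcoh (Iic_subset_Iio.mpr hαβ)]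
  rw [hrho.eq α β hαβ (hβγ.trans hγ), hrho.eq α γ (hαβ.trans hβγ) hγ,
    inter_eq_inter_of_eq_inter hcoh (Iio_subset_Iio hαβ.le),
    csInf_inter_Ici_eq_of_eq_inter_Iio hcoh hne, hLam,
    inter_eq_inter_of_eq_inter hcoh fun _ hx => hx.2.trans hαβ]

end RhoFun

/-- For every limit ordinal `β < ω₂` and `γ` with `β < γ < ω₂`, there is `β' < β`
such that `ρ(α,γ) ≥ ρ(α,β)` for all `α` with `β' < α < β`. -/
theorem rho_ge_on_tail (C : Ordinal.{u} → Set Ordinal.{u}) (hC : SqSeq C)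
    (rho : Ordinal.{u} → Ordinal.{u} → Ordinal.{u}) (hrho : RhoFun C rho)
    (β γ : Ordinal.{u}) (hβ : Order.IsSuccLimit β) (hβγ : β < γ) (hγ : γ < omega2.{u}) :
    ∃ β' < β, ∀ α : Ordinal.{u}, β' < α → α < β → rho α β ≤ rho α γ := by
  induction γ using WellFoundedLT.induction with
  | _ γ IH =>
  by_cases hlim : IsLimPt (C γ) β
  · refine ⟨0, hβ.bot_lt, fun α _ hαβ => (hrho.rho_eq_of_eq_inter_Iio (hC.coh β γ hγ hlim)
      (hC.inter_Ici_nonempty hαβ (hβγ.trans hγ)) hαβ hβγ hγ).le⟩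
  have hgap := sSup_inter_Iio_lt_of_not_isLimPt hβ.bot_lt hlim
  set η := sInf (C γ ∩ Ici β)
  have hη : η ∈ C γ ∩ Ici β := csInf_mem (hC.inter_Ici_nonempty hβγ hγ)
  have hnext : ∀ α, sSup (C γ ∩ Iio β) < α → α < β → rho α η ≤ rho α γ := fun α hα hαβ => by
    simpa only [η, inter_Ici_eq_of_sSup_inter_Iio_lt hα hαβ.le] using
      hrho.rho_sInf_inter_Ici_le (hαβ.trans hβγ) hγ
  rcases (mem_Ici.mp hη.2).eq_or_lt with hβη | hβη
  · exact ⟨_, hgap, fun α hα hαβ => hβη ▸ hnext α hα hαβ⟩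
  · have hηγ : η < γ := hC.subset_Iio hγ hη.1
    obtain ⟨β', hβ', htail⟩ := IH η hηγ hβη (hηγ.trans hγ)
    refine ⟨max β' (sSup (C γ ∩ Iio β)), max_lt hβ' hgap, fun α hα hαβ => ?_⟩
    rw [max_lt_iff] at hα
    exact (htail α hα.1 hαβ).trans (hnext α hα.2 hαβ)
end
end
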